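/- Let α, β ∈ L(H,K) with ‖α‖ < 1 and ‖β‖ < 1. Then I - Φ_α(β)Φ_α(γ)* = D_{α*}(I - βα*)^{-1}(I - βγ*)(I - αγ*)^{-1}D_{α*} for all strict contractions β, γ ∈ L(H,K). In particular, taking γ = β shows Φ_α(β) is a strict contraction. -/

import Mathlib

/-!
Write `P = (1 - αα*)⁻¹` and `Q = (1 - α*α)⁻¹ = D_α⁻²`. Pulling the outer factors
`D_{α*} (1 - βα*)⁻¹` and `(1 - αγ*)⁻¹ D_{α*}` out of `1 - Φ_α(β) Φ_α(γ)*`, and writing `1` as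
`D_{α*} P D_{α*}`, the identity reduces to the algebraic identity
`(1 - βα*) P (1 - αγ*) - (β - α) Q (γ - α)* = 1 - βγ*`, a consequence of the intertwining relation
`α Q = P α`. For `γ = β` the right-hand side is the congruence `u (1 - ββ*) u*` of a strictly
positive operator by an invertible `u`, so `1 - Φ_α(β) Φ_α(β)*` is strictly positive, which in the
C⋆-algebra `L(K)` says exactly that `‖Φ_α(β)‖ < 1`.
-/

open ContinuousLinearMap

noncomputable section

variable {H K : Type*}
  [NormedAddCommGroup H] [InnerProductSpace ℂ H] [CompleteSpace H]
  [NormedAddCommGroup K] [InnerProductSpace ℂ K] [CompleteSpace K]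

/-- The Frostman transformation `Φ_α(β) = D_{α*} (1 - βα*)⁻¹ (β - α) D_α⁻¹`. -/
def frostman (α : H →L[ℂ] K) (Dα : H →L[ℂ] H) (Dα' : K →L[ℂ] K) (β : H →L[ℂ] K) :
    H →L[ℂ] K :=
  Dα' ∘L (Ring.inverse (1 - β ∘L adjoint α)) ∘L (β - α) ∘L (Ring.inverse Dα)

lemma Ring.mul_inverse_mul_self_mul {M₀ : Type*} [MonoidWithZero M₀] {a : M₀} (ha : IsUnit a) :
    a * Ring.inverse (a * a) * a = 1 := by
  rw [Ring.inverse_mul (.inl ha), ← mul_assoc, Ring.mul_inverse_cancel a ha, one_mul,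
    Ring.inverse_mul_cancel a ha]

lemma CStarAlgebra.isStrictlyPositive_one_sub_iff_norm_lt_one {A : Type*} [CStarAlgebra A]
    [PartialOrder A] [StarOrderedRing A] {b : A} (hb : 0 ≤ b) :
    IsStrictlyPositive (1 - b) ↔ ‖b‖ < 1 := by
  refine ⟨fun h ↦ ?_, fun h ↦ ?_⟩
  · obtain hA | hA := subsingleton_or_nontrivial A
    · simp [Subsingleton.elim b 0]
    have hmem : 1 - ‖b‖ ∈ spectrum ℝ (1 - b) := by
      rw [← map_one (algebraMap ℝ A), ← spectrum.singleton_sub_eq]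
      exact Set.sub_mem_sub rfl (norm_mem_spectrum_of_nonneg hb)
    linarith [h.spectrum_pos hmem]
  · refine (isStrictlyPositive_algebraMap (A := A) (sub_pos.2 h)).of_le ?_
    rw [map_sub, map_one]
    exact sub_le_sub_left (IsSelfAdjoint.of_nonneg hb).le_algebraMap_norm_self 1

namespace ContinuousLinearMap

section Normed

variable {𝕜 E F : Type*} [NontriviallyNormedField 𝕜] [NormedAddCommGroup E] [NormedSpace 𝕜 E]
  [NormedAddCommGroup F] [NormedSpace 𝕜 F]

lemma isUnit_one_sub_comp_of_norm_mul_lt_one [CompleteSpace F] {x : E →L[𝕜] F}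
    {y : F →L[𝕜] E} (h : ‖x‖ * ‖y‖ < 1) : IsUnit (1 - x ∘L y) :=
  isUnit_one_sub_of_norm_lt_one ((opNorm_comp_le x y).trans_lt h)

lemma comp_ring_inverse_eq_of_comp_eq {T : E →L[𝕜] F} {a : E →L[𝕜] E} {b : F →L[𝕜] F}
    (ha : IsUnit a) (hb : IsUnit b) (h : T ∘L a = b ∘L T) :
    T ∘L Ring.inverse a = Ring.inverse b ∘L T := by
  have hb' : Ring.inverse b ∘L b = 1 := Ring.inverse_mul_cancel b hb
  have ha' : a ∘L Ring.inverse a = 1 := Ring.mul_inverse_cancel a ha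
  calc T ∘L Ring.inverse a = (Ring.inverse b ∘L b) ∘L T ∘L Ring.inverse a := by
        rw [hb', one_def, id_comp]
    _ = Ring.inverse b ∘L (T ∘L a) ∘L Ring.inverse a := by rw [h]; rfl
    _ = Ring.inverse b ∘L T := by rw [comp_assoc, ha', one_def, comp_id]

lemma comp_ring_inverse_one_sub_comp {α : E →L[𝕜] F} {α' : F →L[𝕜] E}
    (hE : IsUnit (1 - α' ∘L α)) (hF : IsUnit (1 - α ∘L α')) :
    α ∘L Ring.inverse (1 - α' ∘L α) = Ring.inverse (1 - α ∘L α') ∘L α :=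
  comp_ring_inverse_eq_of_comp_eq hE hF <| by
    simp only [comp_sub, sub_comp, one_def, id_comp, comp_id, comp_assoc]

lemma one_sub_comp_ring_inverse_comp_one_sub_sub {α β : E →L[𝕜] F} {α' δ : F →L[𝕜] E}
    (hE : IsUnit (1 - α' ∘L α)) (hF : IsUnit (1 - α ∘L α')) :
    (1 - β ∘L α') ∘L Ring.inverse (1 - α ∘L α') ∘L (1 - α ∘L δ)
      - (β - α) ∘L Ring.inverse (1 - α' ∘L α) ∘L (δ - α') = 1 - β ∘L δ := by
  set P := Ring.inverse (1 - α ∘L α')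
  set Q := Ring.inverse (1 - α' ∘L α)
  have hP : (1 - α ∘L α') ∘L P = 1 := Ring.mul_inverse_cancel _ hF
  have hQ : Q ∘L (1 - α' ∘L α) = 1 := Ring.inverse_mul_cancel _ hE
  have hβP : (1 - β ∘L α') ∘L P = 1 - (β - α) ∘L Q ∘L α' := by
    calc (1 - β ∘L α') ∘L P = ((1 - α ∘L α') - (β - α) ∘L α') ∘L P := by
          congr 1; rw [sub_comp]; abel
      _ = 1 - (β - α) ∘L Q ∘L α' := by
          rw [sub_comp, hP, comp_assoc, comp_ring_inverse_one_sub_comp hF hE]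
  calc (1 - β ∘L α') ∘L P ∘L (1 - α ∘L δ) - (β - α) ∘L Q ∘L (δ - α')
      = (1 - α ∘L δ) - (β - α) ∘L Q ∘L (1 - α' ∘L α) ∘L δ := by
        rw [← comp_assoc, hβP]
        simp only [sub_comp, comp_sub, one_def, id_comp, comp_id, comp_assoc]
        abel
    _ = 1 - β ∘L δ := by
        rw [← comp_assoc Q, hQ]
        simp only [sub_comp, one_def, id_comp]
        abel

end Normed

section Adjoint

variable {𝕜 E F : Type*} [RCLike 𝕜] [NormedAddCommGroup E] [InnerProductSpace 𝕜 E]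
  [CompleteSpace E] [NormedAddCommGroup F] [InnerProductSpace 𝕜 F] [CompleteSpace F]

lemma adjoint_ring_inverse (a : E →L[𝕜] E) : adjoint (Ring.inverse a) = Ring.inverse (adjoint a) :=
  (Ring.inverse_star a).symm

lemma isUnit_one_sub_comp_adjoint {x y : E →L[𝕜] F} (hx : ‖x‖ < 1) (hy : ‖y‖ < 1) :
    IsUnit (1 - x ∘L adjoint y) :=
  isUnit_one_sub_comp_of_norm_mul_lt_one <| by
    rw [adjoint.norm_map]; exact mul_lt_one_of_nonneg_of_lt_one_left (norm_nonneg x) hx hy.le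

lemma isUnit_one_sub_adjoint_comp {x y : E →L[𝕜] F} (hx : ‖x‖ < 1) (hy : ‖y‖ < 1) :
    IsUnit (1 - adjoint x ∘L y) :=
  isUnit_one_sub_comp_of_norm_mul_lt_one <| by
    rw [adjoint.norm_map]; exact mul_lt_one_of_nonneg_of_lt_one_left (norm_nonneg x) hx hy.le

end Adjoint

lemma isStrictlyPositive_one_sub_comp_adjoint_iff (T : H →L[ℂ] K) :
    IsStrictlyPositive (1 - T ∘L adjoint T) ↔ ‖T‖ < 1 := by
  have hnorm : ‖T ∘L adjoint T‖ = ‖T‖ ^ 2 := by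
    simpa [sq] using norm_adjoint_comp_self (adjoint T)
  rw [CStarAlgebra.isStrictlyPositive_one_sub_iff_norm_lt_one
    ((nonneg_iff_isPositive _).2 (isPositive_self_comp_adjoint T)), hnorm,
    sq_lt_one_iff₀ (norm_nonneg T)]

end ContinuousLinearMap

lemma adjoint_frostman (α : H →L[ℂ] K) (Dα : H →L[ℂ] H) (Dα' : K →L[ℂ] K) (γ : H →L[ℂ] K) :
    adjoint (frostman α Dα Dα' γ) = Ring.inverse (adjoint Dα) ∘L adjoint (γ - α) ∘L
      Ring.inverse (1 - α ∘L adjoint γ) ∘L adjoint Dα' := by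
  simp only [frostman, adjoint_comp, adjoint_ring_inverse, map_sub, adjoint_one, adjoint_adjoint,
    comp_assoc]

lemma one_sub_frostman_comp_adjoint_frostman {α : H →L[ℂ] K} (hα : ‖α‖ < 1)
    {Dα : H →L[ℂ] H} (hDα : IsSelfAdjoint Dα) (hDα2 : Dα ∘L Dα = 1 - adjoint α ∘L α)
    {Dα' : K →L[ℂ] K} (hDα' : IsSelfAdjoint Dα') (hDα'2 : Dα' ∘L Dα' = 1 - α ∘L adjoint α)
    {β γ : H →L[ℂ] K} (hβ : ‖β‖ < 1) (hγ : ‖γ‖ < 1) :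
    1 - frostman α Dα Dα' β ∘L adjoint (frostman α Dα Dα' γ)
      = Dα' ∘L Ring.inverse (1 - β ∘L adjoint α) ∘L (1 - β ∘L adjoint γ) ∘L
          Ring.inverse (1 - α ∘L adjoint γ) ∘L Dα' := by
  have hH : IsUnit (1 - adjoint α ∘L α) := isUnit_one_sub_adjoint_comp hα hα
  have hK : IsUnit (1 - α ∘L adjoint α) := isUnit_one_sub_comp_adjoint hα hα
  have hβα : IsUnit (1 - β ∘L adjoint α) := isUnit_one_sub_comp_adjoint hβ hα
  have hαγ : IsUnit (1 - α ∘L adjoint γ) := isUnit_one_sub_comp_adjoint hα hγ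
  have hDαu : IsUnit Dα := isUnit_mul_self_iff.1 (by rwa [mul_def, hDα2])
  have hDα'u : IsUnit Dα' := isUnit_mul_self_iff.1 (by rwa [mul_def, hDα'2])
  set i₁ := Ring.inverse (1 - β ∘L adjoint α)
  set i₂ := Ring.inverse (1 - α ∘L adjoint γ)
  set P := Ring.inverse (1 - α ∘L adjoint α)
  set Q := Ring.inverse (1 - adjoint α ∘L α)
  have hP : Dα' * P * Dα' = 1 := by
    rw [← Ring.mul_inverse_mul_self_mul hDα'u, mul_def Dα' Dα', hDα'2]
  have hQ : Ring.inverse Dα * Ring.inverse Dα = Q := by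
    rw [← Ring.inverse_mul (.inl hDαu), mul_def, hDα2]
  have hΦΦ : frostman α Dα Dα' β ∘L adjoint (frostman α Dα Dα' γ)
      = Dα' * i₁ * ((β - α) ∘L Q ∘L adjoint (γ - α)) * i₂ * Dα' := by
    rw [adjoint_frostman, hDα.adjoint_eq, hDα'.adjoint_eq, ← hQ]; rfl
  have hone : (1 : K →L[ℂ] K)
      = Dα' * i₁ * ((1 - β ∘L adjoint α) * P * (1 - α ∘L adjoint γ)) * i₂ * Dα' := by
    calc (1 : K →L[ℂ] K)
        = Dα' * (i₁ * (1 - β ∘L adjoint α)) * P * ((1 - α ∘L adjoint γ) * i₂) * Dα' := by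
          rw [Ring.inverse_mul_cancel _ hβα, Ring.mul_inverse_cancel _ hαγ, mul_one, mul_one, hP]
      _ = _ := by noncomm_ring
  calc 1 - frostman α Dα Dα' β ∘L adjoint (frostman α Dα Dα' γ)
      = Dα' * i₁ * ((1 - β ∘L adjoint α) * P * (1 - α ∘L adjoint γ)
          - (β - α) ∘L Q ∘L adjoint (γ - α)) * i₂ * Dα' := by
        rw [hΦΦ]; nth_rw 1 [hone]; noncomm_ring
    _ = _ := by
        rw [map_sub,
          ← one_sub_comp_ring_inverse_comp_one_sub_sub (β := β) (δ := adjoint γ) hH hK]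
        rfl

lemma norm_frostman_lt_one {α : H →L[ℂ] K} (hα : ‖α‖ < 1)
    {Dα : H →L[ℂ] H} (hDα : IsSelfAdjoint Dα) (hDα2 : Dα ∘L Dα = 1 - adjoint α ∘L α)
    {Dα' : K →L[ℂ] K} (hDα' : IsSelfAdjoint Dα') (hDα'2 : Dα' ∘L Dα' = 1 - α ∘L adjoint α)
    {β : H →L[ℂ] K} (hβ : ‖β‖ < 1) : ‖frostman α Dα Dα' β‖ < 1 := by
  have hK : IsUnit (1 - α ∘L adjoint α) := isUnit_one_sub_comp_adjoint hα hα
  have hβα : IsUnit (1 - β ∘L adjoint α) := isUnit_one_sub_comp_adjoint hβ hα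
  set u := Dα' * Ring.inverse (1 - β ∘L adjoint α)
  have hu : IsUnit u :=
    (isUnit_mul_self_iff.1 (by rwa [mul_def, hDα'2])).mul hβα.ringInverse
  have hstar : star u = Ring.inverse (1 - α ∘L adjoint β) * Dα' := by
    simp only [u, star_mul, ← Ring.inverse_star, star_sub, star_one, hDα'.star_eq,
      star_eq_adjoint, adjoint_comp, adjoint_adjoint]
  have hconj : Dα' ∘L Ring.inverse (1 - β ∘L adjoint α) ∘L (1 - β ∘L adjoint β) ∘L
      Ring.inverse (1 - α ∘L adjoint β) ∘L Dα' = u * (1 - β ∘L adjoint β) * star u := by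
    rw [hstar]; rfl
  rw [← isStrictlyPositive_one_sub_comp_adjoint_iff,
    one_sub_frostman_comp_adjoint_frostman hα hDα hDα2 hDα' hDα'2 hβ hβ, hconj,
    hu.isStrictlyPositive_star_right_conjugate_iff]
  exact (isStrictlyPositive_one_sub_comp_adjoint_iff β).2 hβ

/-- For strict contractions `α, β, γ ∈ L(H,K)`,
`1 - Φ_α(β) Φ_α(γ)* = D_{α*} (1 - βα*)⁻¹ (1 - βγ*) (1 - αγ*)⁻¹ D_{α*}`; in particular (taking
`γ = β`) `Φ_α(β)` is a strict contraction. -/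
theorem stmt_11 (α : H →L[ℂ] K) (hα : ‖α‖ < 1)
    (Dα : H →L[ℂ] H) (hDα : Dα.IsPositive) (hDα2 : Dα ∘L Dα = 1 - (adjoint α) ∘L α)
    (Dα' : K →L[ℂ] K) (hDα' : Dα'.IsPositive) (hDα'2 : Dα' ∘L Dα' = 1 - α ∘L (adjoint α)) :
    ∀ β γ : H →L[ℂ] K, ‖β‖ < 1 → ‖γ‖ < 1 →
      ((1 : K →L[ℂ] K) - (frostman α Dα Dα' β) ∘L adjoint (frostman α Dα Dα' γ)
        = Dα' ∘L (Ring.inverse (1 - β ∘L adjoint α)) ∘L (1 - β ∘L adjoint γ) ∘L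
            (Ring.inverse (1 - α ∘L adjoint γ)) ∘L Dα') ∧
      ‖frostman α Dα Dα' β‖ < 1 := fun _ _ hβ hγ ↦
  ⟨one_sub_frostman_comp_adjoint_frostman hα hDα.isSelfAdjoint hDα2 hDα'.isSelfAdjoint hDα'2
      hβ hγ,
    norm_frostman_lt_one hα hDα.isSelfAdjoint hDα2 hDα'.isSelfAdjoint hDα'2 hβ⟩

end
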